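/- arXiv:1104.0446 — 3 statements merged into one kernel-verified Lean document; each statement's English description precedes it below -/
import Mathlib

section
/- (Optimality of the low-frequency count.) Let N and d be positive integers with 2d < N, and let u0 : ZMod N → ℝ be a binary signal (u0(x) ∈ {0,1} for all x) with exactly 2d jumps, i.e. card{x ∈ ZMod N : u0(x) ≠ u0(x+1)} = 2d. Then there exists u : ZMod N → ℝ with 0 ≤ u(x) ≤ 1 for all x, u ≠ u0, and a_k(u) = a_k(u0) for every integer k with |k| ≤ d − 1. In other words, the measurements a_k for |k| ≤ d − 1 do not determine u0 among [0,1]-valued signals. -/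
/-
Put `s x = 1 - 2 u₀ x ∈ {±1}` and let `b x ∈ ℂᵈ` be `s x` times the Fourier modes
`e^{-2πikx/N}`, `0 ≤ k < d`. If `0 = ∑ c x • b x` is a convex combination, then `u = u₀ + c s`
stays in `[0,1]`, differs from `u₀`, and has the same coefficients `a_k` as `u₀` for `0 ≤ k < d`,
hence (being real) for `|k| < d`. Otherwise a functional separating `0` from the `b x` yields a
polynomial `P` of degree `< d` with `s x · Re P(ζˣ) > 0` for all `x`, where `ζ = e^{2πi/N}`.
Across each of the `2d` jumps `s` changes sign, so `θ ↦ Re P(e^{iθ})` has a zero in each of `2d`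
disjoint arcs. But on the unit circle `2 zⁿ Re P(z)` agrees with the polynomial
`zⁿ P(z) + zⁿ P̄(1/z)` of degree `≤ 2n`, `n = deg P ≤ d - 1`, so there are at most `2d - 2` zeros.
-/

open Complex Polynomial Set
open scoped ComplexConjugate Real

namespace Polynomial

lemma eval_add_conj_reflect {P : ℂ[X]} {z : ℂ} (hz : ‖z‖ = 1) :
    (X ^ P.natDegree * P + (P.reflect P.natDegree).map (starRingEnd ℂ)).eval z =
      2 * z ^ P.natDegree * (P.eval z).re := by
  have hconj : conj z * z = 1 := by rw [conj_mul', hz]; simp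
  let := invertibleOfRightInverse _ _ hconj
  have key := eval₂_reflect_mul_pow (starRingEnd ℂ) (conj z) P.natDegree P le_rfl
  rw [eval₂_at_apply, invOf_eq_inv, inv_eq_of_mul_eq_one_right hconj] at key
  have hpow : conj z ^ P.natDegree * z ^ P.natDegree = 1 := by
    rw [← mul_pow, hconj, one_pow]
  have hrefl : (P.reflect P.natDegree).eval₂ (starRingEnd ℂ) z =
      z ^ P.natDegree * conj (P.eval z) := by
    rw [← key, mul_comm (z ^ _), mul_assoc, hpow, mul_one]
  rw [eval_add, eval_mul, eval_pow, eval_X, eval_map, hrefl, ← mul_add, add_conj]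
  push_cast
  ring

theorem card_le_of_re_eval_eq_zero (P : ℂ[X]) {s : Finset ℂ} (hs : ∀ z ∈ s, ‖z‖ = 1)
    (hzero : ∀ z ∈ s, (P.eval z).re = 0) {z₀ : ℂ} (hz₀ : ‖z₀‖ = 1) (hP : (P.eval z₀).re ≠ 0) :
    s.card ≤ 2 * P.natDegree := by
  have hH₀ := eval_add_conj_reflect hz₀ (P := P)
  set H := X ^ P.natDegree * P + (P.reflect P.natDegree).map (starRingEnd ℂ)
  have hH : H ≠ 0 := by
    intro h
    have hz₀ne : z₀ ≠ 0 := by rintro rfl; simp at hz₀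
    simp [h, hz₀ne, hP] at hH₀
  have hdeg : H.natDegree ≤ 2 * P.natDegree := by
    refine natDegree_add_le_of_degree_le ?_ ?_
    · exact natDegree_mul_le.trans (by rw [natDegree_X_pow]; omega)
    · exact natDegree_map_le.trans (natDegree_reflect_le.trans (by omega))
  refine (card_le_degree_of_subset_roots fun z hz => ?_).trans hdeg
  rw [mem_roots hH, IsRoot, eval_add_conj_reflect (hs z hz), hzero z hz]
  simp

theorem card_le_of_re_eval_exp_mul_I_eq_zero (P : ℂ[X]) {a : ℝ} {s : Finset ℝ}
    (hs : ↑s ⊆ Ico a (a + 2 * π)) (hzero : ∀ θ ∈ s, (P.eval (cexp (θ * I))).re = 0)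
    {θ₀ : ℝ} (hP : (P.eval (cexp (θ₀ * I))).re ≠ 0) : s.card ≤ 2 * P.natDegree := by
  have hinj : InjOn (fun θ : ℝ => cexp (θ * I)) (Ico a (a + 2 * π)) :=
    fun x hx y hy h => Circle.exp_injOn_Ico (by linarith) hx hy (Subtype.ext h)
  rw [← Finset.card_image_of_injOn (hinj.mono hs)]
  exact card_le_of_re_eval_eq_zero P (by simp [norm_exp_ofReal_mul_I]) (by simpa using hzero)
    (norm_exp_ofReal_mul_I θ₀) hP

end Polynomial

lemma exists_mem_Ioo_eq_zero_of_mul_neg {α : Type*} [ConditionallyCompleteLinearOrder α]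
    [TopologicalSpace α] [OrderTopology α] [DenselyOrdered α] {f : α → ℝ} {a b : α}
    (hab : a ≤ b) (hf : ContinuousOn f (Icc a b)) (h : f a * f b < 0) :
    ∃ c ∈ Ioo a b, f c = 0 := by
  rcases mul_neg_iff.1 h with ⟨ha, hb⟩ | ⟨ha, hb⟩
  · exact intermediate_value_Ioo' hab hf ⟨hb, ha⟩
  · exact intermediate_value_Ioo hab hf ⟨ha, hb⟩

section ConvexHull

variable {ι E : Type*} [Fintype ι]

theorem exists_sum_smul_eq_of_mem_convexHull_range [AddCommGroup E] [Module ℝ E] {b : ι → E}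
    {y : E} (h : y ∈ convexHull ℝ (range b)) :
    ∃ c : ι → ℝ, (∀ i, 0 ≤ c i) ∧ ∑ i, c i = 1 ∧ ∑ i, c i • b i = y := by
  classical
  rw [convexHull_range_eq_exists_affineCombination] at h
  obtain ⟨s, w, hw₀, hw₁, rfl⟩ := h
  refine ⟨fun i => if i ∈ s then w i else 0, fun i => ?_, ?_, ?_⟩
  · dsimp only
    split_ifs with hi
    exacts [hw₀ i hi, le_rfl]
  · simpa [Finset.sum_ite_mem] using hw₁
  · simp [ite_smul, Finset.sum_ite_mem, s.affineCombination_eq_linear_combination b w hw₁]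

theorem exists_forall_pos_of_zero_notMem_convexHull_range [TopologicalSpace E] [AddCommGroup E]
    [IsTopologicalAddGroup E] [T2Space E] [Module ℝ E] [ContinuousSMul ℝ E]
    [LocallyConvexSpace ℝ E] {b : ι → E} (h : 0 ∉ convexHull ℝ (range b)) :
    ∃ f : E →L[ℝ] ℝ, ∀ i, 0 < f (b i) := by
  obtain ⟨f, α, hα, hf⟩ := geometric_hahn_banach_point_closed (convex_convexHull ℝ _)
    ((finite_range b).isClosed_convexHull ℝ) h
  exact ⟨f, fun i => (map_zero f ▸ hα).trans (hf _ (subset_convexHull ℝ _ (mem_range_self i)))⟩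

end ConvexHull

theorem LinearMap.exists_eq_re_sum_mul {ι : Type*} [Fintype ι] [DecidableEq ι]
    (f : (ι → ℂ) →ₗ[ℝ] ℝ) : ∃ γ : ι → ℂ, ∀ w, f w = (∑ i, γ i * w i).re := by
  refine ⟨fun i => f (Pi.single i 1) - I * f (Pi.single i I), fun w => ?_⟩
  conv_lhs => rw [← Finset.univ_sum_single w]
  rw [map_sum, re_sum]
  refine Finset.sum_congr rfl fun i _ => ?_
  have hsingle : Pi.single i (w i) =
      (w i).re • (Pi.single i 1 : ι → ℂ) + (w i).im • (Pi.single i I : ι → ℂ) := by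
    rw [← Pi.single_smul, ← Pi.single_smul, ← Pi.single_add]
    simp [Complex.real_smul, Complex.re_add_im]
  rw [hsingle, map_add, map_smul, map_smul, smul_eq_mul, smul_eq_mul]
  simp only [mul_re, mul_im, sub_re, sub_im, ofReal_re, ofReal_im, I_re, I_im]
  ring

section ZModCircle

variable {N : ℕ} [NeZero N]

lemma conj_toCircle_pow (k : ℕ) (x : ZMod N) :
    conj (ZMod.toCircle x : ℂ) ^ k = cexp (-(2 * π * I) * ((k : ℤ) : ℂ) * x.val / N) := by
  rw [ZMod.toCircle_apply, ← exp_conj, ← exp_nat_mul]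
  congr 1
  simp only [map_mul, map_div₀, map_natCast, conj_ofReal, conj_I, map_ofNat]
  push_cast
  ring

lemma toCircle_add_one (x : ZMod N) :
    (ZMod.toCircle (x + 1) : ℂ) = cexp ((2 * π * (x.val + 1) / N : ℝ) * I) := by
  have hx : x + 1 = ((x.val + 1 : ℕ) : ZMod N) := by simp
  rw [hx, ZMod.toCircle_natCast]
  push_cast
  ring_nf

variable {u0 : ZMod N → ℝ}

lemma exists_re_eval_eq_zero_of_jump (hbin : ∀ x, u0 x = 0 ∨ u0 x = 1) (P : ℂ[X])
    (hpos : ∀ x, 0 < (1 - 2 * u0 x) * (P.eval (ZMod.toCircle x : ℂ)).re) {x : ZMod N}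
    (hx : u0 x ≠ u0 (x + 1)) :
    ∃ θ ∈ Ioo (2 * π * x.val / N) (2 * π * (x.val + 1) / N), (P.eval (cexp (θ * I))).re = 0 := by
  have hx₀ : (ZMod.toCircle x : ℂ) = cexp ((2 * π * x.val / N : ℝ) * I) := by
    rw [ZMod.toCircle_apply]; push_cast; ring_nf
  have hsign : 1 - 2 * u0 (x + 1) = -(1 - 2 * u0 x) := by
    rcases hbin x with h | h <;> rcases hbin (x + 1) with h' | h' <;>
      first | exact absurd (h.trans h'.symm) hx | linarith
  have hsq : (1 - 2 * u0 x) ^ 2 = 1 := by rcases hbin x with h | h <;> norm_num [h]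
  have h₀ := hpos x
  have h₁ := hpos (x + 1)
  rw [hx₀] at h₀
  rw [toCircle_add_one, hsign] at h₁
  refine exists_mem_Ioo_eq_zero_of_mul_neg (by gcongr; linarith) (by fun_prop) ?_
  nlinarith

theorem ncard_jumps_le_of_forall_pos (hbin : ∀ x, u0 x = 0 ∨ u0 x = 1) (P : ℂ[X])
    (hpos : ∀ x, 0 < (1 - 2 * u0 x) * (P.eval (ZMod.toCircle x : ℂ)).re) :
    {x : ZMod N | u0 x ≠ u0 (x + 1)}.ncard ≤ 2 * P.natDegree := by
  classical
  choose! θ hθ hθzero using fun x (hx : u0 x ≠ u0 (x + 1)) =>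
    exists_re_eval_eq_zero_of_jump hbin P hpos hx
  have hlt : ∀ x y : ZMod N, u0 x ≠ u0 (x + 1) → x.val < y.val → θ x < 2 * π * y.val / N := by
    intro x y hx hxy
    refine (hθ x hx).2.trans_le ?_
    have : (x.val + 1 : ℝ) ≤ y.val := by exact_mod_cast hxy
    gcongr
  have hinj : InjOn θ {x | u0 x ≠ u0 (x + 1)} := by
    intro x hx y hy h
    rcases lt_trichotomy x.val y.val with hxy | hxy | hxy
    · exact absurd h ((hlt x y hx hxy).trans (hθ y hy).1).ne
    · exact ZMod.val_injective N hxy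
    · exact absurd h ((hlt y x hy hxy).trans (hθ x hx).1).ne'
  rw [Set.ncard_eq_toFinset_card', ← Finset.card_image_of_injOn (by simpa using hinj)]
  refine card_le_of_re_eval_exp_mul_I_eq_zero P (a := 0) ?_ (by simpa using hθzero) (θ₀ := 0) ?_
  · intro θ' hθ'
    obtain ⟨x, hx, rfl⟩ := by simpa using hθ'
    have hval : (x.val + 1 : ℝ) ≤ N := by exact_mod_cast ZMod.val_lt x
    constructor
    · exact (by positivity : (0 : ℝ) ≤ 2 * π * x.val / N).trans (hθ x hx).1.le
    · calc θ x < 2 * π * (x.val + 1) / N := (hθ x hx).2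
        _ ≤ 2 * π * N / N := by gcongr
        _ = 0 + 2 * π := by rw [mul_div_cancel_right₀ _ (NeZero.ne (N : ℝ)), zero_add]
  · simpa using right_ne_zero_of_mul (hpos 0).ne'

variable (N) in
noncomputable def dftCoeff (v : ZMod N → ℝ) (k : ℤ) : ℂ :=
  ∑ x : ZMod N, (v x : ℂ) * cexp (-(2 * π * I) * (k : ℂ) * (x.val : ℂ) / (N : ℂ))

lemma dftCoeff_add (u v : ZMod N → ℝ) (k : ℤ) :
    dftCoeff N (u + v) k = dftCoeff N u k + dftCoeff N v k := by
  simp only [dftCoeff, Pi.add_apply, ofReal_add, add_mul, Finset.sum_add_distrib]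

lemma dftCoeff_neg (v : ZMod N → ℝ) (k : ℤ) : dftCoeff N v (-k) = conj (dftCoeff N v k) := by
  simp only [dftCoeff, map_sum, map_mul, conj_ofReal, ← exp_conj, map_div₀, map_neg, conj_I,
    map_natCast, map_intCast, map_ofNat, Int.cast_neg]
  refine Finset.sum_congr rfl fun x _ => ?_
  ring_nf

lemma dftCoeff_eq_zero_of_abs_le {v : ZMod N → ℝ} {d : ℕ}
    (h : ∀ k : ℕ, k < d → dftCoeff N v k = 0) {k : ℤ} (hk : |k| ≤ d - 1) :
    dftCoeff N v k = 0 := by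
  rw [Int.abs_eq_natAbs] at hk
  rcases Int.natAbs_eq k with hk' | hk' <;> rw [hk']
  · exact h _ (by omega)
  · rw [dftCoeff_neg, h _ (by omega), map_zero]

variable (N) in
noncomputable def inwardModes (d : ℕ) (u0 : ZMod N → ℝ) (x : ZMod N) : Fin d → ℂ :=
  fun k => ((1 - 2 * u0 x : ℝ) : ℂ) * cexp (-(2 * π * I) * ((k : ℕ) : ℤ) * x.val / N)

variable {d : ℕ}

lemma sum_smul_inwardModes_apply (c : ZMod N → ℝ) (k : Fin d) :
    (∑ x, c x • inwardModes N d u0 x) k = dftCoeff N (fun x => c x * (1 - 2 * u0 x)) (k : ℕ) := by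
  simp only [Finset.sum_apply, Pi.smul_apply, inwardModes, dftCoeff, real_smul, ofReal_mul,
    mul_assoc]

lemma re_sum_mul_inwardModes (γ : Fin d → ℂ) (x : ZMod N) :
    (∑ k, γ k * inwardModes N d u0 x k).re =
      (1 - 2 * u0 x) *
        ((∑ k : Fin d, C (conj (γ k)) * X ^ (k : ℕ)).eval (ZMod.toCircle x : ℂ)).re := by
  have h : ∑ k, γ k * inwardModes N d u0 x k = ((1 - 2 * u0 x : ℝ) : ℂ) *
      conj ((∑ k : Fin d, C (conj (γ k)) * X ^ (k : ℕ)).eval (ZMod.toCircle x : ℂ)) := by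
    simp only [inwardModes, ← conj_toCircle_pow, eval_finsetSum, eval_mul, eval_C, eval_pow,
      eval_X, map_sum, map_mul, map_pow, conj_conj, Finset.mul_sum]
    exact Finset.sum_congr rfl fun k _ => by ring
  rw [h, re_ofReal_mul, conj_re]

end ZModCircle

lemma add_mul_one_sub_two_mul_mem_Icc {a c : ℝ} (ha : a = 0 ∨ a = 1) (hc₀ : 0 ≤ c) (hc₁ : c ≤ 1) :
    0 ≤ a + c * (1 - 2 * a) ∧ a + c * (1 - 2 * a) ≤ 1 := by
  rcases ha with rfl | rfl <;> constructor <;> linarith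

theorem stmt_5_general (N d : ℕ) [NeZero N] (hd : 0 < d)
    (u0 : ZMod N → ℝ) (hbin : ∀ x, u0 x = 0 ∨ u0 x = 1)
    (hjumps : {x : ZMod N | u0 x ≠ u0 (x + 1)}.ncard = 2 * d) :
    ∃ u : ZMod N → ℝ, (∀ x, 0 ≤ u x ∧ u x ≤ 1) ∧ u ≠ u0 ∧
      ∀ k : ℤ, |k| ≤ (d : ℤ) - 1 →
        (∑ x : ZMod N, (u x : ℂ) *
            Complex.exp (-(2 * Real.pi * Complex.I) * (k : ℂ) * (x.val : ℂ) / (N : ℂ))) =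
        (∑ x : ZMod N, (u0 x : ℂ) *
            Complex.exp (-(2 * Real.pi * Complex.I) * (k : ℂ) * (x.val : ℂ) / (N : ℂ))) := by
  classical
  by_cases h0 : (0 : Fin d → ℂ) ∈ convexHull ℝ (range (inwardModes N d u0))
  · obtain ⟨c, hc₀, hc₁, hcb⟩ := exists_sum_smul_eq_of_mem_convexHull_range h0
    have hc_le (x) : c x ≤ 1 := hc₁ ▸ Finset.single_le_sum (fun y _ => hc₀ y) (Finset.mem_univ x)
    refine ⟨u0 + fun x => c x * (1 - 2 * u0 x),
      fun x => add_mul_one_sub_two_mul_mem_Icc (hbin x) (hc₀ x) (hc_le x), fun h => ?_,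
      fun k hk => ?_⟩
    · have hc (x) : c x = 0 := by
        have hx : c x * (1 - 2 * u0 x) = 0 := by simpa using congrFun h x
        exact (mul_eq_zero.1 hx).resolve_right (by rcases hbin x with h' | h' <;> norm_num [h'])
      simp [hc] at hc₁
    · change dftCoeff N _ k = dftCoeff N u0 k
      rw [dftCoeff_add, add_eq_left]
      refine dftCoeff_eq_zero_of_abs_le (fun k hk => ?_) hk
      rw [← sum_smul_inwardModes_apply c ⟨k, hk⟩, hcb, Pi.zero_apply]
  · obtain ⟨f, hf⟩ := exists_forall_pos_of_zero_notMem_convexHull_range h0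
    obtain ⟨γ, hγ⟩ := f.toLinearMap.exists_eq_re_sum_mul
    have hdeg : (∑ k : Fin d, C (conj (γ k)) * X ^ (k : ℕ)).natDegree ≤ d - 1 :=
      natDegree_sum_le_of_forall_le _ _ fun k _ =>
        (natDegree_C_mul_X_pow_le _ _).trans (by omega)
    have hjumps_le := ncard_jumps_le_of_forall_pos hbin _ fun x => by
      rw [← re_sum_mul_inwardModes, ← hγ]
      exact hf x
    omega

/-- Optimality of the low-frequency count: if a binary signal has exactly `2d` jumps,
then the Fourier coefficients `a_k` for `|k| ≤ d - 1` do not determine it among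
`[0,1]`-valued signals. -/
theorem stmt_5 (N d : ℕ) [NeZero N] (hd : 0 < d) (h2d : 2 * d < N)
    (u0 : ZMod N → ℝ) (hbin : ∀ x, u0 x = 0 ∨ u0 x = 1)
    (hjumps : {x : ZMod N | u0 x ≠ u0 (x + 1)}.ncard = 2 * d) :
    ∃ u : ZMod N → ℝ, (∀ x, 0 ≤ u x ∧ u x ≤ 1) ∧ u ≠ u0 ∧
      ∀ k : ℤ, |k| ≤ (d : ℤ) - 1 →
        (∑ x : ZMod N, (u x : ℂ) *
            Complex.exp (-(2 * Real.pi * Complex.I) * (k : ℂ) * (x.val : ℂ) / (N : ℂ))) =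
        (∑ x : ZMod N, (u0 x : ℂ) *
            Complex.exp (-(2 * Real.pi * Complex.I) * (k : ℂ) * (x.val : ℂ) / (N : ℂ))) :=
  stmt_5_general N d hd u0 hbin hjumps
end

section
/- Let N and d be positive integers with 2d ≤ N. Let u0 : {0,1,…,N−1} → ℝ be a binary signal (u0(x) ∈ {0,1} for all x) consisting of at most 2d maximal constant blocks, i.e. card{x : 0 ≤ x ≤ N−2 and u0(x) ≠ u0(x+1)} ≤ 2d − 1. If u : {0,1,…,N−1} → ℝ satisfies 0 ≤ u(x) ≤ 1 for all x and c_k(u) = c_k(u0) for every integer k with 0 ≤ k ≤ 2d, then u = u0. -/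
/-!
On the samples, `v = u - u0` satisfies `v x * (1 - 2 * u0 x) ≥ 0`, because `u0` is binary and `u`
is `[0,1]`-valued: the sign of `v` is prescribed and flips only at the at most `2d - 1` jumps of
`u0`. The polynomial `p` whose roots are the cosines of the angles halfway between the two samples
of each jump has that same sign pattern at the sample points `cos θ_x`. As `deg p ≤ 2d` and
`T_k(cos θ) = cos (k θ)`, the vanishing of the DCT coefficients of `v` up to `2d` gives
`∑ v x * p (cos θ_x) = 0`, a sum of nonnegative terms. Each term vanishes, and `p (cos θ_x) ≠ 0`
forces `v = 0`.
-/

open Real Finset Polynomial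

theorem sum_mul_eval_cos_eq_zero {ι : Type*} {s : Finset ι} {v θ : ι → ℝ} {m : ℕ}
    (h : ∀ k ≤ m, ∑ x ∈ s, v x * cos (k * θ x) = 0) {P : ℝ[X]} (hP : P.natDegree ≤ m) :
    ∑ x ∈ s, v x * P.eval (cos (θ x)) = 0 := by
  -- the Chebyshev polynomials `T k`, `k ≤ m`, span the polynomials of degree `≤ m`
  let L : ℝ[X] →ₗ[ℝ] ℝ := ∑ x ∈ s, v x • leval (cos (θ x))
  have hL (Q : ℝ[X]) : L Q = ∑ x ∈ s, v x * Q.eval (cos (θ x)) := by simp [L, leval]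
  have hker : degreeLE ℝ m ≤ LinearMap.ker L := by
    rw [← (Chebyshev.chebyshevTsequence ℝ).span_degreeLE
      (fun i _ => by simp [Chebyshev.chebyshevTsequence, Chebyshev.leadingCoeff_T]),
      Submodule.span_le]
    rintro _ ⟨k, hk, rfl⟩
    simpa [hL, Chebyshev.chebyshevTsequence, Chebyshev.T_real_cos] using h k hk
  simpa [hL] using hker (mem_degreeLE.2 (degree_le_of_natDegree_le hP))

/-- `dctNode N (2 * x + 1)` is `cos θ_x` at the DCT sampling angle `θ_x = π (2x + 1) / (2N)`;
`dctNode N (2 * s + 2)` lies strictly between the samples at `s` and `s + 1`. -/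
noncomputable def dctNode (N i : ℕ) : ℝ := cos (π * i / (2 * N))

theorem strictAntiOn_dctNode (N : ℕ) : StrictAntiOn (dctNode N) (Set.Iic (2 * N)) := by
  intro i hi j hj hij
  have hN : (0 : ℝ) < 2 * N := by
    have : 0 < 2 * N := (hij.trans_le hj).bot_lt
    exact_mod_cast this
  have hmem {k : ℕ} (hk : k ≤ 2 * N) : π * k / (2 * N) ∈ Set.Icc 0 π := by
    refine ⟨by positivity, div_le_of_le_mul₀ hN.le pi_pos.le ?_⟩
    exact mul_le_mul_of_nonneg_left (by exact_mod_cast hk) pi_pos.le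
  refine strictAntiOn_cos (hmem hi) (hmem hj) ?_
  gcongr

theorem neg_one_pow_card_filter_lt_mul_prod {ι : Type*} (S : Finset ι) (c : ι → ℝ) (t : ℝ) :
    (-1) ^ #(S.filter fun s => t < c s) * ∏ s ∈ S, (t - c s) = ∏ s ∈ S, |t - c s| := by
  rw [← prod_filter_mul_prod_filter_not S (fun s => t < c s),
    ← prod_filter_mul_prod_filter_not S (fun s => t < c s) (fun s => |t - c s|), ← mul_assoc,
    ← prod_const, ← prod_mul_distrib]
  congr 1 <;> refine prod_congr rfl fun s hs => ?_ <;> rw [mem_filter] at hs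
  · rw [abs_of_neg (by linarith [hs.2])]; ring
  · rw [abs_of_nonneg (by linarith [hs.2])]

noncomputable def jumps (f : ℕ → ℝ) (n : ℕ) : Finset ℕ :=
  (range n).filter fun x => f x ≠ f (x + 1)

theorem one_sub_two_mul_mul_eq_neg_one_pow_card_jumps {f : ℕ → ℝ} {n : ℕ}
    (hf : ∀ x ≤ n, f x = 0 ∨ f x = 1) :
    (1 - 2 * f 0) * (1 - 2 * f n) = (-1) ^ #(jumps f n) := by
  induction n with
  | zero => rcases hf 0 le_rfl with h | h <;> norm_num [jumps, h]
  | succ n ih =>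
    rw [jumps, range_add_one, filter_insert, ← jumps]
    have ih := ih fun x hx => hf x (by omega)
    split_ifs with hjump
    · have hflip : f (n + 1) = 1 - f n := by
        rcases hf n (by omega) with h | h <;> rcases hf (n + 1) le_rfl with h' | h' <;>
          simp_all
      rw [card_insert_of_notMem (by simp [jumps]), pow_succ, ← ih, hflip]
      ring
    · rw [← ih, ← not_ne_iff.1 hjump]

theorem eq_zero_of_sum_mul_eq_zero_of_sign {ι : Type*} {s : Finset ι} {v w p : ι → ℝ}
    (hsum : ∑ x ∈ s, v x * p x = 0) (hv : ∀ x ∈ s, 0 ≤ v x * w x)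
    (hwp : ∀ x ∈ s, 0 < w x * p x) : ∀ x ∈ s, v x = 0 := by
  have hterm : ∀ x ∈ s, 0 ≤ v x * p x := fun x hx => by
    have hw : 0 < w x ^ 2 := by positivity [left_ne_zero_of_mul (hwp x hx).ne']
    refine nonneg_of_mul_nonneg_left ?_ hw
    convert mul_nonneg (hv x hx) (hwp x hx).le using 1
    ring
  intro x hx
  exact (mul_eq_zero.1 ((sum_eq_zero_iff_of_nonneg hterm).1 hsum x hx)).resolve_right
    (right_ne_zero_of_mul (hwp x hx).ne')

noncomputable def jumpPoly (f : ℕ → ℝ) (N : ℕ) : ℝ[X] :=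
  ∏ s ∈ jumps f (N - 1), (X - C (dctNode N (2 * s + 2)))

theorem jumps_eq_filter_dctNode_lt {f : ℕ → ℝ} {N x : ℕ} (hx : x < N) :
    jumps f x =
      (jumps f (N - 1)).filter fun s => dctNode N (2 * x + 1) < dctNode N (2 * s + 2) := by
  have hlt {s : ℕ} (hs : s < N) : dctNode N (2 * x + 1) < dctNode N (2 * s + 2) ↔ s < x := by
    rw [(strictAntiOn_dctNode N).lt_iff_gt (Set.mem_Iic.2 (by omega)) (Set.mem_Iic.2 (by omega))]
    omega
  ext s
  simp only [jumps, mem_filter, mem_range]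
  constructor
  · rintro ⟨hsx, hjump⟩
    exact ⟨⟨by omega, hjump⟩, (hlt (by omega)).2 hsx⟩
  · rintro ⟨⟨hs, hjump⟩, hsx⟩
    exact ⟨(hlt (by omega)).1 hsx, hjump⟩

theorem mul_eval_jumpPoly_pos {f : ℕ → ℝ} {N x : ℕ} (hf : ∀ y < N, f y = 0 ∨ f y = 1)
    (hx : x < N) :
    0 < (1 - 2 * f 0) * (1 - 2 * f x) * (jumpPoly f N).eval (dctNode N (2 * x + 1)) := by
  rw [one_sub_two_mul_mul_eq_neg_one_pow_card_jumps fun y hy => hf y (by omega),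
    jumps_eq_filter_dctNode_lt hx, jumpPoly, eval_prod]
  simp only [eval_sub, eval_X, eval_C]
  rw [neg_one_pow_card_filter_lt_mul_prod]
  refine prod_pos fun s hs => abs_pos.2 (sub_ne_zero.2 fun h => ?_)
  have hs : s < N - 1 := mem_range.1 (mem_filter.1 hs).1
  have := (strictAntiOn_dctNode N).injOn (Set.mem_Iic.2 (by omega)) (Set.mem_Iic.2 (by omega)) h
  omega

theorem stmt_6_general (N d : ℕ)
    (u0 : ℕ → ℝ) (hbin : ∀ x < N, u0 x = 0 ∨ u0 x = 1)
    (hjumps : ((Finset.range (N - 1)).filter fun x => u0 x ≠ u0 (x + 1)).card ≤ 2 * d - 1)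
    (u : ℕ → ℝ) (hbox : ∀ x < N, 0 ≤ u x ∧ u x ≤ 1)
    (hdct : ∀ k : ℕ, k ≤ 2 * d →
      (∑ x ∈ Finset.range N,
          u x * Real.cos (Real.pi * k * (2 * x + 1) / (2 * N))) =
      (∑ x ∈ Finset.range N,
          u0 x * Real.cos (Real.pi * k * (2 * x + 1) / (2 * N)))) :
    ∀ x < N, u x = u0 x := by
  have hcos : ∀ k ≤ 2 * d, ∑ x ∈ range N,
      (u x - u0 x) * cos (k * (π * (2 * x + 1 : ℕ) / (2 * N))) = 0 := fun k hk => by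
    simp only [sub_mul, sum_sub_distrib, sub_eq_zero]
    convert hdct k hk using 4 <;> push_cast <;> ring_nf
  have horth := sum_mul_eval_cos_eq_zero hcos (P := C (1 - 2 * u0 0) * jumpPoly u0 N)
    (natDegree_C_mul_le _ _ |>.trans <| by
      rw [jumpPoly, natDegree_finsetProd_X_sub_C_eq_card]; exact hjumps.trans (Nat.sub_le _ _))
  intro x hx
  refine sub_eq_zero.1 (eq_zero_of_sum_mul_eq_zero_of_sign horth (w := fun y => 1 - 2 * u0 y)
    (fun y hy => ?_) (fun y hy => ?_) x (mem_range.2 hx)) <;> rw [mem_range] at hy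
  · rcases hbin y hy with h | h <;> simp only [h] <;> linarith [hbox y hy]
  · rw [eval_mul, eval_C, ← mul_assoc, mul_comm (1 - 2 * u0 y)]
    exact mul_eval_jumpPoly_pos hbin hy

/-- Corollary (DCT version): a binary signal on `{0, …, N-1}` consisting of at most
`2d` maximal constant blocks is uniquely determined, among `[0,1]`-valued signals, by
its discrete cosine transform coefficients `c_k` for `0 ≤ k ≤ 2d`. -/
theorem stmt_6 (N d : ℕ) (hd : 0 < d) (h2d : 2 * d ≤ N)
    (u0 : ℕ → ℝ) (hbin : ∀ x < N, u0 x = 0 ∨ u0 x = 1)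
    (hjumps : ((Finset.range (N - 1)).filter fun x => u0 x ≠ u0 (x + 1)).card ≤ 2 * d - 1)
    (u : ℕ → ℝ) (hbox : ∀ x < N, 0 ≤ u x ∧ u x ≤ 1)
    (hdct : ∀ k : ℕ, k ≤ 2 * d →
      (∑ x ∈ Finset.range N,
          u x * Real.cos (Real.pi * k * (2 * x + 1) / (2 * N))) =
      (∑ x ∈ Finset.range N,
          u0 x * Real.cos (Real.pi * k * (2 * x + 1) / (2 * N)))) :
    ∀ x < N, u x = u0 x :=
  stmt_6_general N d u0 hbin hjumps u hbox hdct
end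

section
/- Let A be a real m×N matrix whose row space R = {Aᵀη : η ∈ ℝ^m} has dimension r with 1 ≤ r ≤ N and is in general position, meaning that for every set s of r coordinates the restriction map R → ℝ^s, v ↦ (v(i))_{i∈s}, is injective. Then the number of binary vectors u0 ∈ {0,1}^N that are uniquely recoverable by (P1) — i.e., such that u0 is the unique u ∈ ℝ^N with A u = A u0 and 0 ≤ u(x) ≤ 1 for all x — equals 2·Σ_{i=0}^{r−1} C(N−1, i). -/
/-!
Let `σ` record the coordinates where the binary vector `u₀` equals `1`. A box-feasible `u` with
`A u = A u₀` differs from `u₀` by some `h ∈ ker A` lying in the closed orthant opposite to `σ`, and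
conversely every such `h`, suitably scaled, gives a feasible `u`. By Gordan's alternative
(separating the open orthant of `σ` from the row space `R`, whose orthogonal complement is
`ker A`), `u₀` is therefore the unique solution iff `R` meets the open orthant of `σ`.

It remains to count the open orthants met by a subspace `R ⊆ ℝ^(n+1)` of dimension `r` in general
position. Drop the first coordinate: an orthant of `ℝ^n` met by the projection of `R` is the
projection of one or two orthants met by `R`, and of two exactly when it is met by the projection
of `R ∩ {x₀ = 0}`. Both projections are again in general position, of dimensions `r` and `r - 1`,
so the count satisfies Pascal's recursion and equals `2 ∑_{i<r} C(n, i)`.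
-/

open Finset Matrix Filter Topology Module

section Orthant

variable {ι : Type*}

def orthant (σ : ι → Bool) : Set (ι → ℝ) :=
  Set.univ.pi fun i => if σ i then Set.Ioi 0 else Set.Iio 0

lemma orthant_nonempty (σ : ι → Bool) : (orthant σ).Nonempty :=
  ⟨fun i => if σ i then 1 else -1, fun i _ => by cases h : σ i <;> simp [h]⟩

lemma isOpen_orthant [Finite ι] (σ : ι → Bool) : IsOpen (orthant σ) :=
  isOpen_set_pi Set.finite_univ fun i _ => by cases σ i <;> simp [isOpen_Ioi, isOpen_Iio]

lemma convex_orthant (σ : ι → Bool) : Convex ℝ (orthant σ) :=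
  convex_pi fun i _ => by cases σ i <;> simp [convex_Ioi, convex_Iio]

lemma closure_orthant [Finite ι] (σ : ι → Bool) :
    closure (orthant σ) = Set.univ.pi fun i => if σ i then Set.Ici 0 else Set.Iic 0 := by
  rw [orthant, closure_pi_set]
  congr! 2 with i
  cases σ i <;> simp

lemma smul_add_smul_mem_orthant {σ : ι → Bool} {x y : ι → ℝ} {a b : ℝ} (ha : 0 < a) (hb : 0 < b)
    (hx : x ∈ orthant σ) (hy : y ∈ orthant σ) : a • x + b • y ∈ orthant σ := by
  intro i _
  have hxi := hx i trivial
  have hyi := hy i trivial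
  cases h : σ i <;> simp only [h, Bool.false_eq_true, if_true, if_false, Set.mem_Ioi,
    Set.mem_Iio, Pi.add_apply, Pi.smul_apply, smul_eq_mul] at hxi hyi ⊢
  · nlinarith
  · positivity

lemma eventually_add_smul_mem_orthant [Finite ι] {σ : ι → Bool} {x : ι → ℝ}
    (hx : x ∈ orthant σ) (y : ι → ℝ) : ∀ᶠ δ in 𝓝 (0 : ℝ), x + δ • y ∈ orthant σ := by
  have hcont : Continuous fun δ : ℝ => x + δ • y := by fun_prop
  have hlim : Tendsto (fun δ : ℝ => x + δ • y) (𝓝 0) (𝓝 x) := by simpa using hcont.tendsto 0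
  exact hlim ((isOpen_orthant σ).mem_nhds hx)

lemma LinearMap.apply_eq_dotProduct [Fintype ι] [DecidableEq ι] (f : (ι → ℝ) →ₗ[ℝ] ℝ)
    (x : ι → ℝ) : f x = (fun i => f (Pi.single i 1)) ⬝ᵥ x := by
  conv_lhs => rw [pi_eq_sum_univ' x]
  simp [dotProduct, mul_comm]

theorem exists_orthogonal_mem_closure_orthant [Fintype ι] (S : Submodule ℝ (ι → ℝ))
    (σ : ι → Bool) (hS : Disjoint (orthant σ) (S : Set (ι → ℝ))) :
    ∃ v ≠ 0, v ∈ closure (orthant σ) ∧ ∀ w ∈ S, v ⬝ᵥ w = 0 := by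
  classical
  obtain ⟨f, u, hfo, hfS⟩ :=
    geometric_hahn_banach_open (convex_orthant σ) (isOpen_orthant σ) S.convex hS
  -- `f` is bounded below on the subspace `S`, hence vanishes on it.
  have hf0 : ∀ w ∈ S, f w = 0 := by
    intro w hw
    by_contra hne
    have := hfS _ (S.smul_mem ((u - 1) / f w) hw)
    rw [map_smul, smul_eq_mul, div_mul_cancel₀ _ hne] at this
    linarith
  have hu : u ≤ 0 := by simpa using hfS 0 S.zero_mem
  have hcl : ∀ x ∈ closure (orthant σ), f x ≤ 0 :=
    (closure_mono fun x hx => (hfo x hx).trans_le hu).trans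
      (closure_lt_subset_le f.continuous continuous_const)
  set v : ι → ℝ := -fun i => f (Pi.single i 1)
  have hfv : ∀ x, f x = -(v ⬝ᵥ x) := by
    intro x
    rw [← ContinuousLinearMap.coe_coe, LinearMap.apply_eq_dotProduct]
    simp [v]
  refine ⟨v, fun hv => ?_, ?_, fun w hw => by simpa [hfv] using hf0 w hw⟩
  · obtain ⟨c, hc⟩ := orthant_nonempty σ
    simpa [hfv, hv] using (hfo c hc).trans_le hu
  · rw [closure_orthant]
    intro i _
    set c : ℝ := if σ i then 1 else -1
    have := hcl (Pi.single i c) (by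
      rw [closure_orthant]
      intro j _
      rcases eq_or_ne j i with rfl | hj
      · cases h : σ j <;> simp [c, h]
      · cases h : σ j <;> simp [hj, h])
    cases h : σ i <;> simp_all [c]

def MeetsOrthant (R : Submodule ℝ (ι → ℝ)) (σ : ι → Bool) : Prop :=
  ∃ w ∈ R, w ∈ orthant σ

noncomputable def orthantCount (R : Submodule ℝ (ι → ℝ)) : ℕ :=
  {σ : ι → Bool | MeetsOrthant R σ}.ncard

end Orthant

section Recovery

variable {κ ι : Type*}

def binaryVec (σ : ι → Bool) : ι → ℝ := fun i => if σ i then 1 else 0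

lemma binaryVec_injective : Function.Injective (binaryVec : (ι → Bool) → ι → ℝ) :=
  fun σ τ h => funext fun i => by
    have := congrFun h i
    cases hσ : σ i <;> cases hτ : τ i <;> simp_all [binaryVec]

lemma range_binaryVec :
    Set.range (binaryVec : (ι → Bool) → ι → ℝ) = {u | ∀ x, u x = 0 ∨ u x = 1} := by
  ext u
  refine ⟨?_, fun hu => ⟨fun i => decide (u i = 1), funext fun i => ?_⟩⟩
  · rintro ⟨σ, rfl⟩ x
    cases σ x <;> simp [binaryVec, *]
  · rcases hu i with h | h <;> simp [binaryVec, h]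

lemma card_binary_eq_ncard (Q : (ι → ℝ) → Prop) :
    Nat.card {u : ι → ℝ // (∀ x, u x = 0 ∨ u x = 1) ∧ Q u} =
      {σ : ι → Bool | Q (binaryVec σ)}.ncard := by
  have himage : {u : ι → ℝ | (∀ x, u x = 0 ∨ u x = 1) ∧ Q u} =
      binaryVec '' {σ | Q (binaryVec σ)} := by
    ext u
    constructor
    · rintro ⟨hu, hQ⟩
      obtain ⟨σ, rfl⟩ : u ∈ Set.range binaryVec := range_binaryVec.ge hu
      exact ⟨σ, hQ, rfl⟩
    · rintro ⟨σ, hσ, rfl⟩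
      exact ⟨range_binaryVec.le ⟨σ, rfl⟩, hσ⟩
  rw [← Set.ncard_image_of_injective _ binaryVec_injective, ← himage]
  exact Nat.card_coe_set_eq _

variable [Fintype κ] [Fintype ι]

def UniquelyRecoverable (A : Matrix κ ι ℝ) (u₀ : ι → ℝ) : Prop :=
  ∀ u : ι → ℝ, A *ᵥ u = A *ᵥ u₀ → (∀ x, 0 ≤ u x ∧ u x ≤ 1) → u = u₀

lemma mulVec_eq_zero_iff_forall_dotProduct (A : Matrix κ ι ℝ) (v : ι → ℝ) :
    A *ᵥ v = 0 ↔ ∀ w ∈ LinearMap.range (mulVecLin Aᵀ), w ⬝ᵥ v = 0 := by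
  have key : ∀ η, (Aᵀ *ᵥ η) ⬝ᵥ v = η ⬝ᵥ (A *ᵥ v) := fun η => by
    rw [dotProduct_comm, dotProduct_mulVec, vecMul_transpose, dotProduct_comm]
  constructor
  · rintro hv _ ⟨η, rfl⟩
    rw [mulVecLin_apply, key, hv, dotProduct_zero]
  · intro h
    rw [← dotProduct_self_eq_zero, ← key]
    exact h _ ⟨_, rfl⟩

lemma eq_zero_of_dotProduct_eq_zero_of_mul_nonpos {w h : ι → ℝ} (hw : ∀ i, w i ≠ 0)
    (hwh : ∀ i, w i * h i ≤ 0) (h0 : w ⬝ᵥ h = 0) : h = 0 := by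
  have := (sum_eq_zero_iff_of_nonpos fun i _ => hwh i).mp h0
  funext i
  exact (mul_eq_zero.mp (this i (mem_univ i))).resolve_left (hw i)

lemma binaryVec_sub_smul_mem_Icc {σ : ι → Bool} {v : ι → ℝ} (hv : v ∈ closure (orthant σ))
    (i : ι) : (binaryVec σ - ‖v‖⁻¹ • v) i ∈ Set.Icc 0 1 := by
  rw [closure_orthant] at hv
  have hsign := hv i trivial
  have hvi : v i / ‖v‖ ∈ Set.Icc (-1) 1 := abs_le.mp <| by
    rw [abs_div, abs_norm]
    exact div_le_one_of_le₀ (by simpa using norm_le_pi_norm v i) (norm_nonneg v)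
  simp only [Set.mem_Icc, Pi.sub_apply, Pi.smul_apply, smul_eq_mul, binaryVec,
    inv_mul_eq_div] at hvi ⊢
  cases h : σ i <;> simp [h] at hsign ⊢
  · have := div_nonpos_of_nonpos_of_nonneg hsign (norm_nonneg v)
    constructor <;> linarith
  · have := div_nonneg hsign (norm_nonneg v)
    constructor <;> linarith

theorem uniquelyRecoverable_binaryVec_iff (A : Matrix κ ι ℝ) (σ : ι → Bool) :
    UniquelyRecoverable A (binaryVec σ) ↔ MeetsOrthant (LinearMap.range (mulVecLin Aᵀ)) σ := by
  constructor
  · intro hσ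
    by_contra hno
    obtain ⟨v, hv0, hvσ, hvR⟩ := exists_orthogonal_mem_closure_orthant _ σ
      (Set.disjoint_right.mpr fun w hw hwσ => hno ⟨w, hw, hwσ⟩)
    have hAv : A *ᵥ v = 0 := (mulVec_eq_zero_iff_forall_dotProduct A v).mpr fun w hw => by
      rw [dotProduct_comm, hvR w hw]
    have := hσ (binaryVec σ - ‖v‖⁻¹ • v) (by simp [mulVec_sub, mulVec_smul, hAv])
      (binaryVec_sub_smul_mem_Icc hvσ)
    exact hv0 (by simpa [norm_ne_zero_iff.mpr hv0] using this)
  · rintro ⟨w, hwR, hw⟩ u hAu hu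
    rw [← sub_eq_zero]
    refine eq_zero_of_dotProduct_eq_zero_of_mul_nonpos (w := w) (fun i => ?_) (fun i => ?_) ?_
    · have hwi := hw i trivial
      cases h : σ i <;> simp [h] at hwi
      exacts [hwi.ne, hwi.ne']
    · obtain ⟨hu0, hu1⟩ := hu i
      have hwi := hw i trivial
      cases h : σ i <;> simp [h, binaryVec] at hwi ⊢
      · exact mul_nonpos_of_nonpos_of_nonneg hwi.le hu0
      · exact mul_nonpos_of_nonneg_of_nonpos hwi.le (by linarith)
    · exact (mulVec_eq_zero_iff_forall_dotProduct A _).mp (by rw [mulVec_sub, hAu, sub_self]) w hwR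

end Recovery

section GeneralPosition

variable {ι : Type*}

def InGeneralPosition (R : Submodule ℝ (ι → ℝ)) : Prop :=
  ∀ s : Finset ι, #s = finrank ℝ R → ∀ v ∈ R, (∀ i ∈ s, v i = 0) → v = 0

lemma InGeneralPosition.eq_zero {R : Submodule ℝ (ι → ℝ)} (hR : InGeneralPosition R)
    {s : Finset ι} (hs : finrank ℝ R ≤ #s) {v : ι → ℝ} (hv : v ∈ R) (h0 : ∀ i ∈ s, v i = 0) :
    v = 0 := by
  obtain ⟨t, hts, ht⟩ := exists_subset_card_eq hs
  exact hR t ht v hv fun i hi => h0 i (hts hi)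

lemma InGeneralPosition.exists_apply_ne_zero [Fintype ι] {R : Submodule ℝ (ι → ℝ)}
    (hR : InGeneralPosition R) (hr : finrank ℝ R ≠ 0) (j : ι) : ∃ u ∈ R, u j ≠ 0 := by
  classical
  by_contra! h
  obtain ⟨t, hjt, -, ht⟩ := exists_subsuperset_card_eq (singleton_subset_iff.mpr (mem_univ j))
    (by simpa [Nat.one_le_iff_ne_zero]) (by simpa using Submodule.finrank_le R)
  have hjt : j ∈ t := hjt (mem_singleton_self j)
  let φ := (LinearMap.funLeft ℝ ℝ (Subtype.val : t.erase j → ι)).comp R.subtype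
  have hφ : Function.Injective φ := by
    rw [← LinearMap.ker_eq_bot, LinearMap.ker_eq_bot']
    intro v hv
    refine Subtype.ext (hR.eq_zero ht.ge v.2 fun i hi => ?_)
    rcases eq_or_ne i j with rfl | hij
    · exact h v v.2
    · exact congrFun hv ⟨i, mem_erase.mpr ⟨hij, hi⟩⟩
  have := LinearMap.finrank_le_finrank_of_injective hφ
  rw [finrank_fintype_fun_eq_card, Fintype.card_coe, card_erase_of_mem hjt, ht] at this
  omega

end GeneralPosition

lemma Submodule.finrank_map_eq_of_disjoint_ker {M N : Type*} [AddCommGroup M] [Module ℝ M]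
    [AddCommGroup N] [Module ℝ N] {f : M →ₗ[ℝ] N} {P : Submodule ℝ M}
    (h : Disjoint P (LinearMap.ker f)) : finrank ℝ (P.map f) = finrank ℝ P := by
  have hinj : Function.Injective (f ∘ₗ P.subtype) := LinearMap.ker_eq_bot.mp <|
    LinearMap.ker_eq_bot'.mpr fun x hx => Subtype.ext (Submodule.disjoint_def.mp h x x.2 hx)
  rw [← LinearMap.finrank_range_of_inj hinj, LinearMap.range_comp, Submodule.range_subtype]

lemma finrank_inf_ker_proj {ι : Type*} [Fintype ι] {R : Submodule ℝ (ι → ℝ)} {j : ι}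
    (hu : ∃ u ∈ R, u j ≠ 0) :
    finrank ℝ ↥(R ⊓ LinearMap.ker (LinearMap.proj j)) = finrank ℝ R - 1 := by
  obtain ⟨u, huR, hu0⟩ := hu
  let ψ := (LinearMap.proj j : (ι → ℝ) →ₗ[ℝ] ℝ).comp R.subtype
  have hψ : LinearMap.range ψ = ⊤ := LinearMap.range_eq_top.mpr fun x =>
    ⟨⟨(x / u j) • u, R.smul_mem _ huR⟩, by simp [ψ, hu0]⟩
  have := LinearMap.finrank_range_add_finrank_ker ψ
  rw [hψ, finrank_top, finrank_self, LinearMap.ker_comp, ← Submodule.finrank_map_subtype_eq,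
    Submodule.map_comap_subtype] at this
  omega

lemma ncard_setOf_cons {n : ℕ} (P : (Fin (n + 1) → Bool) → Prop) :
    {σ | P σ}.ncard = {τ | P (Fin.cons true τ)}.ncard + {τ | P (Fin.cons false τ)}.ncard := by
  classical
  simp only [Set.ncard_eq_toFinset_card', Set.toFinset_ofPred, card_filter]
  rw [← Fintype.sum_equiv (Fin.consEquiv fun _ => Bool) _ _ fun _ => rfl, Fintype.sum_prod_type,
    Fintype.sum_bool]
  rfl

section FirstCoordinate

variable {n : ℕ} {R : Submodule ℝ (Fin (n + 1) → ℝ)}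

local notation "tail" => LinearMap.funLeft ℝ ℝ (Fin.succ : Fin n → Fin (n + 1))

lemma mem_orthant_cons {x : Fin (n + 1) → ℝ} {b : Bool} {τ : Fin n → Bool} :
    x ∈ orthant (Fin.cons b τ : Fin (n + 1) → Bool) ↔
      x 0 ∈ (if b then Set.Ioi 0 else Set.Iio 0) ∧ tail x ∈ orthant τ := by
  simp [orthant, Fin.forall_fin_succ]

lemma MeetsOrthant.map_tail {b : Bool} {τ : Fin n → Bool} (h : MeetsOrthant R (Fin.cons b τ)) :
    MeetsOrthant (R.map tail) τ := by
  obtain ⟨w, hwR, hw⟩ := h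
  exact ⟨_, Submodule.mem_map_of_mem hwR, (mem_orthant_cons.mp hw).2⟩

lemma meetsOrthant_map_tail_inf_ker {τ : Fin n → Bool} (hpos : MeetsOrthant R (Fin.cons true τ))
    (hneg : MeetsOrthant R (Fin.cons false τ)) :
    MeetsOrthant ((R ⊓ LinearMap.ker (LinearMap.proj 0)).map tail) τ := by
  obtain ⟨p, hpR, hp⟩ := hpos
  obtain ⟨q, hqR, hq⟩ := hneg
  rw [mem_orthant_cons] at hp hq
  simp only [if_true, Bool.false_eq_true, if_false, Set.mem_Ioi, Set.mem_Iio] at hp hq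
  -- a combination with positive coefficients that kills the first coordinate
  refine ⟨tail ((-q 0) • p + p 0 • q), ⟨_, ⟨?_, ?_⟩, rfl⟩, ?_⟩
  · exact R.add_mem (R.smul_mem _ hpR) (R.smul_mem _ hqR)
  · simp only [SetLike.mem_coe, LinearMap.mem_ker, LinearMap.proj_apply, Pi.add_apply,
      Pi.smul_apply, smul_eq_mul]
    ring
  · simpa using smul_add_smul_mem_orthant (neg_pos.mpr hq.1) hp.1 hp.2 hq.2

lemma MeetsOrthant.cons_of_map_tail_inf_ker (hu : ∃ u ∈ R, u 0 ≠ 0) {τ : Fin n → Bool}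
    (h : MeetsOrthant ((R ⊓ LinearMap.ker (LinearMap.proj 0)).map tail) τ) (b : Bool) :
    MeetsOrthant R (Fin.cons b τ) := by
  obtain ⟨u, huR, hu0⟩ := hu
  obtain ⟨_, ⟨v, ⟨hvR, hv0⟩, rfl⟩, hv⟩ := h
  set c : ℝ := if b then 1 else -1
  -- Push `v` along `(c / u 0) • u`, whose first coordinate is `c`: the orthant of `τ` is open,
  -- so a small `δ > 0` keeps the other coordinates in it.
  obtain ⟨δ, hδ, hδpos⟩ := (((eventually_add_smul_mem_orthant hv (tail ((c / u 0) • u))).filter_mono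
    nhdsWithin_le_nhds).and (self_mem_nhdsWithin (s := Set.Ioi (0 : ℝ)))).exists
  refine ⟨v + δ • (c / u 0) • u, R.add_mem hvR (R.smul_mem _ (R.smul_mem _ huR)),
    mem_orthant_cons.mpr ⟨?_, by simpa using hδ⟩⟩
  simp only [SetLike.mem_coe, LinearMap.mem_ker, LinearMap.proj_apply] at hv0
  cases b <;> simp [c, hv0, hu0, hδpos]

lemma MeetsOrthant.exists_cons_of_map_tail (hu : ∃ u ∈ R, u 0 ≠ 0) {τ : Fin n → Bool}
    (h : MeetsOrthant (R.map tail) τ) : ∃ b, MeetsOrthant R (Fin.cons b τ) := by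
  obtain ⟨_, ⟨w, hwR, rfl⟩, hw⟩ := h
  rcases lt_trichotomy (w 0) 0 with hneg | hzero | hpos
  · exact ⟨false, w, hwR, mem_orthant_cons.mpr ⟨hneg, hw⟩⟩
  · exact ⟨true, MeetsOrthant.cons_of_map_tail_inf_ker hu ⟨_, ⟨w, ⟨hwR, hzero⟩, rfl⟩, hw⟩ true⟩
  · exact ⟨true, w, hwR, mem_orthant_cons.mpr ⟨hpos, hw⟩⟩

theorem orthantCount_eq_add (hu : ∃ u ∈ R, u 0 ≠ 0) :
    orthantCount R = orthantCount (R.map tail) +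
      orthantCount ((R ⊓ LinearMap.ker (LinearMap.proj 0)).map tail) := by
  rw [orthantCount, ncard_setOf_cons,
    ← Set.ncard_union_add_ncard_inter _ _ (Set.toFinite _) (Set.toFinite _)]
  congr 2 <;> ext τ <;> simp only [Set.mem_union, Set.mem_inter_iff, Set.mem_ofPred_eq]
  · refine ⟨fun h => h.elim MeetsOrthant.map_tail MeetsOrthant.map_tail, fun h => ?_⟩
    obtain ⟨b, hb⟩ := h.exists_cons_of_map_tail hu
    cases b
    exacts [Or.inr hb, Or.inl hb]
  · exact ⟨fun h => meetsOrthant_map_tail_inf_ker h.1 h.2, fun h =>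
      ⟨h.cons_of_map_tail_inf_ker hu true, h.cons_of_map_tail_inf_ker hu false⟩⟩

lemma InGeneralPosition.disjoint_ker_tail (hR : InGeneralPosition R) (hr : finrank ℝ R ≤ n) :
    Disjoint R (LinearMap.ker tail) :=
  Submodule.disjoint_def.mpr fun _ hv hv0 =>
    hR.eq_zero (s := univ.map (Fin.succEmb n)) (by simpa using hr) hv
      (forall_mem_map.mpr fun i _ => congrFun hv0 i)

lemma disjoint_ker_proj_zero_ker_tail :
    Disjoint (LinearMap.ker (LinearMap.proj 0)) (LinearMap.ker tail) :=
  Submodule.disjoint_def.mpr fun _ hv hv0 => funext <| Fin.cases hv fun i => congrFun hv0 i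

lemma InGeneralPosition.map_tail (hR : InGeneralPosition R) (hr : finrank ℝ R ≤ n) :
    InGeneralPosition (R.map tail) := by
  rintro s hs _ ⟨v, hv, rfl⟩ hvs
  rw [Submodule.finrank_map_eq_of_disjoint_ker (hR.disjoint_ker_tail hr)] at hs
  rw [hR.eq_zero (s := s.map (Fin.succEmb n)) (by simp [hs]) hv (by simpa using hvs), map_zero]

lemma InGeneralPosition.map_tail_inf_ker (hR : InGeneralPosition R) (hu : ∃ u ∈ R, u 0 ≠ 0) :
    InGeneralPosition ((R ⊓ LinearMap.ker (LinearMap.proj 0)).map tail) := by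
  rintro s hs _ ⟨v, ⟨hv, hv0⟩, rfl⟩ hvs
  rw [Submodule.finrank_map_eq_of_disjoint_ker
    (disjoint_ker_proj_zero_ker_tail.mono_left inf_le_right), finrank_inf_ker_proj hu] at hs
  rw [hR.eq_zero (s := cons 0 (s.map (Fin.succEmb n)) (by simp)) (by simp; omega) hv
    (by simpa using ⟨hv0, hvs⟩), map_zero]

end FirstCoordinate

lemma orthantCount_of_finrank_eq_zero {ι : Type*} [Finite ι] [Nonempty ι]
    {R : Submodule ℝ (ι → ℝ)} (hR : finrank ℝ R = 0) : orthantCount R = 0 := by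
  have hnone : {σ : ι → Bool | MeetsOrthant R σ} = ∅ := by
    refine Set.eq_empty_of_forall_notMem fun σ ⟨w, hwR, hw⟩ => ?_
    rw [Submodule.finrank_eq_zero.mp hR, Submodule.mem_bot] at hwR
    obtain ⟨i⟩ := ‹Nonempty ι›
    have := hw i trivial
    cases h : σ i <;> simp [h, hwR] at this
  rw [orthantCount, hnone, Set.ncard_empty]

lemma orthantCount_of_finrank_eq_card {ι : Type*} [Fintype ι] {R : Submodule ℝ (ι → ℝ)}
    (hR : finrank ℝ R = Fintype.card ι) : orthantCount R = 2 ^ Fintype.card ι := by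
  classical
  have htop : R = ⊤ := Submodule.eq_top_of_finrank_eq (by simpa using hR)
  have hall : {σ : ι → Bool | MeetsOrthant R σ} = Set.univ :=
    Set.eq_univ_of_forall fun σ =>
      let ⟨x, hx⟩ := orthant_nonempty σ
      ⟨x, htop ▸ Submodule.mem_top, hx⟩
  rw [orthantCount, hall, Set.ncard_univ, Nat.card_eq_fintype_card, Fintype.card_fun,
    Fintype.card_bool]

lemma sum_range_choose_succ (n r : ℕ) :
    ∑ i ∈ range (r + 1), (n + 1).choose i =
      ∑ i ∈ range (r + 1), n.choose i + ∑ i ∈ range r, n.choose i := by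
  rw [sum_range_succ', sum_range_succ' (fun i => n.choose i)]
  simp [Nat.choose_succ_succ, sum_add_distrib]
  ring

theorem orthantCount_eq_of_inGeneralPosition {n : ℕ} {R : Submodule ℝ (Fin (n + 1) → ℝ)}
    (hR : InGeneralPosition R) :
    orthantCount R = 2 * ∑ i ∈ range (finrank ℝ R), n.choose i := by
  induction n with
  | zero =>
    have : finrank ℝ R ≤ 1 := by simpa using Submodule.finrank_le R
    interval_cases h : finrank ℝ R
    · simp [orthantCount_of_finrank_eq_zero h]
    · simp [orthantCount_of_finrank_eq_card (h.trans (Fintype.card_fin 1).symm)]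
  | succ k ih =>
    obtain h0 | hpos := Nat.eq_zero_or_pos (finrank ℝ R)
    · simp [orthantCount_of_finrank_eq_zero h0, h0]
    obtain htop | hlt := (show finrank ℝ R ≤ k + 2 by simpa using Submodule.finrank_le R).eq_or_lt
    · rw [orthantCount_of_finrank_eq_card (by simpa using htop), htop, Nat.sum_range_choose,
        Fintype.card_fin]
      ring
    obtain ⟨r, hr⟩ := Nat.exists_eq_add_one_of_ne_zero hpos.ne'
    have hu := hR.exists_apply_ne_zero hpos.ne' 0
    rw [orthantCount_eq_add hu, ih (hR.map_tail (by omega)), ih (hR.map_tail_inf_ker hu),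
      Submodule.finrank_map_eq_of_disjoint_ker (hR.disjoint_ker_tail (by omega)),
      Submodule.finrank_map_eq_of_disjoint_ker
        (disjoint_ker_proj_zero_ker_tail.mono_left inf_le_right), finrank_inf_ker_proj hu, hr,
      sum_range_choose_succ]
    simp only [add_tsub_cancel_right]
    ring

/-- If the row space of `A` has dimension `r` and is in general position, then exactly
`2 ∑_{i=0}^{r-1} C(N-1, i)` of the `2^N` binary vectors are uniquely recoverable by
the box-constrained problem (P1). -/
theorem stmt_13 (m N r : ℕ) (hr : 1 ≤ r) (hrN : r ≤ N)
    (A : Matrix (Fin m) (Fin N) ℝ) (R : Submodule ℝ (Fin N → ℝ))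
    (hR : R = LinearMap.range (Matrix.mulVecLin A.transpose))
    (hdim : Module.finrank ℝ R = r)
    (hgen : ∀ s : Finset (Fin N), s.card = r →
      Function.Injective fun v : R => fun i : s => (v : Fin N → ℝ) i) :
    Nat.card {u0 : Fin N → ℝ //
        (∀ x, u0 x = 0 ∨ u0 x = 1) ∧
        ∀ u : Fin N → ℝ, A.mulVec u = A.mulVec u0 →
          (∀ x, 0 ≤ u x ∧ u x ≤ 1) → u = u0} =
      2 * ∑ i ∈ Finset.range r, Nat.choose (N - 1) i := by
  have hgp : InGeneralPosition R := fun s hs v hv hvs =>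
    congrArg Subtype.val (hgen s (hdim ▸ hs) (a₁ := ⟨v, hv⟩) (a₂ := 0)
      (funext fun i => by simpa using hvs i i.2))
  obtain ⟨n, rfl⟩ : ∃ n, N = n + 1 := ⟨N - 1, by omega⟩
  calc _ = {σ : Fin (n + 1) → Bool | UniquelyRecoverable A (binaryVec σ)}.ncard :=
        card_binary_eq_ncard (UniquelyRecoverable A)
    _ = orthantCount R := by simp_rw [uniquelyRecoverable_binaryVec_iff, ← hR]; rfl
    _ = _ := by rw [orthantCount_eq_of_inGeneralPosition hgp, hdim, Nat.add_sub_cancel]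
end
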